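/- Let L > 0, p, n ∈ ℕ with n = p, and x₀ ∈ [0, L/2) such that sin((pπ/L)(L/2 - x₀)) = 0. With q = (L/2 - x₀)/(L/2 + x₀) and Φₚ(x) = √(2/L)·sin((pπ/L)(L/2 - x)), define Υ(x) = -√q·Φₚ(x) on [-L/2, x₀] and (1/√q)·Φₚ(x) on (x₀, L/2]. Then ∫_{-L/2}^{L/2} Υ(x)·Φₚ(x) dx = 0. -/

import Mathlib

open Real MeasureTheory intervalIntegral

/- The mode `Φₚ` vanishes at `-L/2`, `x₀` and `L/2`, so on each of `[-L/2, x₀]` and `[x₀, L/2]`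
its square integrates to the length of the interval divided by `L`. The two contributions
`-√q (L/2 + x₀)/L` and `(L/2 - x₀)/(√q L)` then cancel, because
`√q (L/2 + x₀) = (L/2 - x₀)/√q` for `q = (L/2 - x₀)/(L/2 + x₀)`. -/

theorem integral_sin_mul_sub_sq_of_sin_eq_zero {a b c x₁ : ℝ} (hc : c ≠ 0)
    (ha : sin (c * (x₁ - a)) = 0) (hb : sin (c * (x₁ - b)) = 0) :
    ∫ x in a..b, sin (c * (x₁ - x)) ^ 2 = (b - a) / 2 := by
  simp only [mul_sub] at ha hb ⊢
  rw [integral_comp_sub_mul (fun u => sin u ^ 2) hc, integral_sin_sq, ha, hb, smul_eq_mul]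
  field_simp
  ring

theorem integral_sqrt_two_div_mul_sin_sq_of_sin_eq_zero {a b c x₁ L : ℝ} (hL : 0 < L)
    (hc : c ≠ 0) (ha : sin (c * (x₁ - a)) = 0) (hb : sin (c * (x₁ - b)) = 0) :
    ∫ x in a..b, (sqrt (2 / L) * sin (c * (x₁ - x))) ^ 2 = (b - a) / L := by
  simp only [mul_pow, sq_sqrt (by positivity : 0 ≤ 2 / L), intervalIntegral.integral_const_mul,
    integral_sin_mul_sub_sq_of_sin_eq_zero hc ha hb]
  field_simp

theorem integral_ite_le {f g : ℝ → ℝ} {a x₀ b : ℝ} (ha : a ≤ x₀) (hb : x₀ ≤ b)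
    (hf : IntervalIntegrable f volume a x₀) (hg : IntervalIntegrable g volume x₀ b) :
    ∫ x in a..b, (if x ≤ x₀ then f x else g x) = (∫ x in a..x₀, f x) + ∫ x in x₀..b, g x := by
  have hf' : Set.EqOn (fun x => if x ≤ x₀ then f x else g x) f (Set.uIoc a x₀) := by
    intro x hx
    rw [Set.uIoc_of_le ha] at hx
    exact if_pos hx.2
  have hg' : Set.EqOn (fun x => if x ≤ x₀ then f x else g x) g (Set.uIoc x₀ b) := by
    intro x hx
    rw [Set.uIoc_of_le hb] at hx
    exact if_neg (not_le.mpr hx.1)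
  rw [← integral_add_adjacent_intervals (hf.congr hf'.symm) (hg.congr hg'.symm),
    integral_congr_ae (Filter.Eventually.of_forall fun x hx => hf' hx),
    integral_congr_ae (Filter.Eventually.of_forall fun x hx => hg' hx)]

theorem sqrt_div_mul_eq_div_sqrt_div {A B : ℝ} (hA : 0 < A) (hB : 0 < B) :
    sqrt (A / B) * B = A / sqrt (A / B) := by
  rw [eq_div_iff (by positivity), mul_right_comm, mul_self_sqrt (by positivity),
    div_mul_cancel₀ A hB.ne']

theorem stmt_10 (L x₀ : ℝ) (hL : 0 < L) (hx₀ : 0 ≤ x₀) (hx₀' : x₀ < L/2)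
    (q : ℝ) (hq : q = (L/2 - x₀)/(L/2 + x₀))
    (p : ℕ) (hp : 0 < p)
    (Φ : ℝ → ℝ) (hΦ : ∀ x, Φ x = Real.sqrt (2/L) * Real.sin ((p*π/L)*(L/2 - x)))
    (hΦ0 : Real.sin ((p*π/L)*(L/2 - x₀)) = 0)
    (Υ : ℝ → ℝ)
    (hΥ : ∀ x, Υ x = if x ≤ x₀ then -Real.sqrt q * Φ x else (1/Real.sqrt q) * Φ x) :
    (∫ x in (-(L/2))..(L/2), Υ x * Φ x) = 0 := by
  have hc : p * π / L ≠ 0 := by positivity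
  have hleft : sin ((p * π / L) * (L/2 - -(L/2))) = 0 := by
    rw [← sin_nat_mul_pi p]
    congr 1
    field_simp
    ring
  have hright : sin ((p * π / L) * (L/2 - L/2)) = 0 := by simp
  have hΥΦ : ∀ x, Υ x * Φ x = if x ≤ x₀ then -sqrt q * Φ x ^ 2 else 1 / sqrt q * Φ x ^ 2 := by
    intro x
    rw [hΥ]
    split_ifs <;> ring
  have hΦ_sq_integrable (r a b : ℝ) : IntervalIntegrable (fun x => r * Φ x ^ 2) volume a b := by
    simp only [hΦ]
    exact Continuous.intervalIntegrable (by fun_prop) a b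
  have hbalance := sqrt_div_mul_eq_div_sqrt_div (by linarith : 0 < L/2 - x₀)
    (by linarith : 0 < L/2 + x₀)
  rw [← hq] at hbalance
  simp only [hΥΦ]
  rw [integral_ite_le (by linarith) hx₀'.le (hΦ_sq_integrable _ _ _) (hΦ_sq_integrable _ _ _),
    intervalIntegral.integral_const_mul, intervalIntegral.integral_const_mul]
  simp only [hΦ]
  rw [integral_sqrt_two_div_mul_sin_sq_of_sin_eq_zero hL hc hleft hΦ0,
    integral_sqrt_two_div_mul_sin_sq_of_sin_eq_zero hL hc hΦ0 hright]
  linear_combination (-1 / L) * hbalance
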